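/- arXiv:1408.1917 — 3 statements merged into one kernel-verified Lean document; each statement's English description precedes it below -/
import Mathlib

section
/- Let (G, L) be a rational structure and H ≤ G a subgroup. Define V_L(H) = { H·μ(u) : u is a prefix of some word w ∈ L with μ(w) ∈ H }, a set of right cosets of H. Then: (i) H is L-quasi-convex if and only if V_L(H) is finite; (ii) more precisely, for every k ≥ 1, H is L-quasi-convex with constant k if and only if every coset in V_L(H) contains an element g with |g| ≤ k. -/
open List

/-- A word over the alphabet Ã = A ∪ A⁻¹ is a `List (A × Bool)`: the letter `(a, true)`
stands for `a` and `(a, false)` for the formal inverse `a⁻¹`. A word is *reduced* if it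
has no factor `a·a⁻¹` or `a⁻¹·a`. -/
def Reduced {A : Type*} (w : List (A × Bool)) : Prop :=
  w.Chain' fun p q => ¬(p.1 = q.1 ∧ q.2 = !p.2)

variable {A : Type*} [Fintype A] {G : Type*} [Group G]

/-- Evaluation in `G` of a word over Ã, determined by the images `f a` of the letters.
This is the (inverse-respecting) monoid homomorphism μ : Ã* → G. -/
def eval (f : A → G) (w : List (A × Bool)) : G :=
  (w.map fun p => if p.2 then f p.1 else (f p.1)⁻¹).prod

/-- Word length of `g ∈ G` with respect to the generators `A`:
the least length of a word over Ã mapping onto `g`. -/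
noncomputable def wlen (f : A → G) (g : G) : ℕ :=
  sInf {n | ∃ w : List (A × Bool), eval f w = g ∧ w.length = n}

/-- A rational structure: `L` is a regular language of reduced words with μ(L) = G. -/
def RationalStructure (f : A → G) (L : Set (List (A × Bool))) : Prop :=
  Language.IsRegular (L : Language (A × Bool)) ∧ (∀ w ∈ L, Reduced w) ∧
    ∀ g : G, ∃ w ∈ L, eval f w = g

/-- `H` is L-quasi-convex with constant `k`: for every `w ∈ L` with `μ(w) ∈ H` and
every prefix `u` of `w`, there is `h ∈ H` with `|h⁻¹ μ(u)| ≤ k`. -/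
def QCW (f : A → G) (L : Set (List (A × Bool))) (H : Subgroup G) (k : ℕ) : Prop :=
  ∀ w ∈ L, eval f w ∈ H → ∀ u, u <+: w → ∃ h ∈ H, wlen f (h⁻¹ * eval f u) ≤ k

/-- The set of right cosets `H·μ(u)` where `u` ranges over prefixes of words
`w ∈ L` with `μ(w) ∈ H` (the vertex set of the Stallings graph Γ_L(H)). -/
def VL (f : A → G) (L : Set (List (A × Bool))) (H : Subgroup G) : Set (Set G) :=
  {S | ∃ w ∈ L, eval f w ∈ H ∧ ∃ u, u <+: w ∧ S = {x | ∃ h ∈ H, x = h * eval f u}}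

/-- H is L-quasi-convex iff V_L(H) is finite; and for k ≥ 1,
H is L-quasi-convex with constant k iff every coset in V_L(H) contains an
element of word length at most k. -/
theorem stmt0 (f : A → G) (L : Set (List (A × Bool))) (H : Subgroup G)
    (hL : RationalStructure f L) :
    ((∃ k, QCW f L H k) ↔ (VL f L H).Finite) ∧
    (∀ k : ℕ, 1 ≤ k → (QCW f L H k ↔ ∀ S ∈ VL f L H, ∃ g ∈ S, wlen f g ≤ k)) := by
  obtain ⟨-, -, hsurj⟩ := hL
  have hne : ∀ g : G,
      {n | ∃ w : List (A × Bool), eval f w = g ∧ w.length = n}.Nonempty := by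
    intro g
    obtain ⟨w, -, hw⟩ := hsurj g
    exact ⟨w.length, w, hw, rfl⟩
  have hwlen : ∀ g : G, ∃ w : List (A × Bool), eval f w = g ∧ w.length = wlen f g := by
    intro g
    exact Nat.sInf_mem (hne g)
  have part2 : ∀ k : ℕ, (QCW f L H k ↔ ∀ S ∈ VL f L H, ∃ g ∈ S, wlen f g ≤ k) := by
    intro k
    constructor
    · intro hq S hS
      obtain ⟨w, hw, hwH, u, hu, rfl⟩ := hS
      obtain ⟨h, hh, hle⟩ := hq w hw hwH u hu
      exact ⟨h⁻¹ * eval f u, ⟨h⁻¹, H.inv_mem hh, rfl⟩, hle⟩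
    · intro hs w hw hwH u hu
      obtain ⟨g, ⟨h, hh, rfl⟩, hle⟩ := hs _ ⟨w, hw, hwH, u, hu, rfl⟩
      exact ⟨h⁻¹, H.inv_mem hh, by simpa using hle⟩
  refine ⟨⟨?_, ?_⟩, fun k _ => part2 k⟩
  · rintro ⟨k, hq⟩
    have hsub : VL f L H ⊆ (fun g => {x | ∃ h ∈ H, x = h * g}) ''
        (eval f '' {w : List (A × Bool) | w.length ≤ k}) := by
      intro S hS
      obtain ⟨g, hgS, hgk⟩ := (part2 k).1 hq S hS
      refine ⟨g, ?_, ?_⟩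
      · obtain ⟨w, hwg, hwl⟩ := hwlen g
        exact ⟨w, by simp only [Set.mem_setOf_eq]; omega, hwg⟩
      · obtain ⟨w, hw, hwH, u, hu, rfl⟩ := hS
        obtain ⟨h0, hh0, rfl⟩ := hgS
        ext x
        simp only [Set.mem_setOf_eq]
        constructor
        · rintro ⟨h, hh, rfl⟩
          exact ⟨h * h0, H.mul_mem hh hh0, by group⟩
        · rintro ⟨h, hh, rfl⟩
          exact ⟨h * h0⁻¹, H.mul_mem hh (H.inv_mem hh0), by group⟩
    exact Set.Finite.subset (((List.finite_length_le _ k).image _).image _) hsub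
  · intro hfin
    obtain ⟨k, hk⟩ := (hfin.image (fun S => sInf (wlen f '' S))).bddAbove
    refine ⟨k, ?_⟩
    rw [part2 k]
    intro S hS
    have hSne : (wlen f '' S).Nonempty := by
      obtain ⟨w, hw, hwH, u, hu, rfl⟩ := hS
      exact ⟨wlen f (eval f u), ⟨eval f u, ⟨1, H.one_mem, by simp⟩, rfl⟩⟩
    obtain ⟨g, hgS, hg⟩ := Nat.sInf_mem hSne
    refine ⟨g, hgS, ?_⟩
    calc wlen f g = sInf (wlen f '' S) := hg
      _ ≤ k := hk ⟨S, hS, rfl⟩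
end

section
/- Let (G, L) be a rational structure and H ≤ G a subgroup. Then H is L-quasi-convex if and only if the language L ∩ μ⁻¹(H) = { w ∈ L : μ(w) ∈ H } is regular (i.e. H is L-rational). -/
open List

variable {A : Type*} [Fintype A] {G : Type*} [Group G]

/-! By Myhill–Nerode, a language is regular iff it has finitely many left quotients.
Write `K = L ∩ μ⁻¹(H)`. If `u` is a prefix of a word of `K` and `μ(u) = h g` with `h ∈ H`,
then the left quotient of `K` by `u` is `L.leftQuotient u ∩ {y | g μ(y) ∈ H}`.
Quasi-convexity lets `g` range over a ball of radius `k`, which is finite, so `K` has finitely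
many left quotients.
Conversely, finitely many left quotients give a uniform bound `k` on the length of a shortest
completion `y` of a prefix `u` to a word `u y ∈ K`, and then `h = μ(u y) ∈ H` lies within
`|y| ≤ k` of `μ(u)`. -/

theorem Language.IsRegular.exists_bounded_completion {α : Type*} {K : Language α}
    (hK : K.IsRegular) :
    ∃ k, ∀ u v, u ++ v ∈ K → ∃ y, u ++ y ∈ K ∧ y.length ≤ k := by
  let shortest (P : Language α) : ℕ := sInf {n | ∃ y ∈ P, y.length = n}
  obtain ⟨k, hk⟩ := (hK.finite_range_leftQuotient.image shortest).bddAbove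
  refine ⟨k, fun u v huv => ?_⟩
  obtain ⟨y, hy, hy_len⟩ : ∃ y ∈ K.leftQuotient u, y.length = shortest (K.leftQuotient u) :=
    Nat.sInf_mem (⟨_, v, huv, rfl⟩ : {n | ∃ y ∈ K.leftQuotient u, y.length = n}.Nonempty)
  exact ⟨y, hy, hy_len ▸ hk ⟨_, ⟨u, rfl⟩, rfl⟩⟩

section Words

variable {α : Type*} {Γ : Type*} [Group Γ] (f : α → Γ)

theorem eval_eq_lift_mk (w : List (α × Bool)) :
    eval f w = FreeGroup.lift f (FreeGroup.mk w) := by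
  simp only [eval, FreeGroup.lift_mk, Bool.cond_eq_ite]

theorem eval_append (u v : List (α × Bool)) : eval f (u ++ v) = eval f u * eval f v := by
  simp only [eval, List.map_append, List.prod_append]

theorem eval_invRev (w : List (α × Bool)) : eval f (FreeGroup.invRev w) = (eval f w)⁻¹ := by
  rw [eval_eq_lift_mk, eval_eq_lift_mk, ← FreeGroup.inv_mk, map_inv]

theorem wlen_eval_le (w : List (α × Bool)) : wlen f (eval f w) ≤ w.length :=
  Nat.sInf_le ⟨w, rfl, rfl⟩

theorem mem_image_eval_of_wlen_le {g : Γ} {k : ℕ} (hg : ∃ w, eval f w = g)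
    (hk : wlen f g ≤ k) : g ∈ eval f '' {w | w.length ≤ k} := by
  obtain ⟨w₀, hw₀⟩ := hg
  obtain ⟨w, hw, hw_len⟩ : ∃ w, eval f w = g ∧ w.length = wlen f g :=
    Nat.sInf_mem (⟨_, w₀, hw₀, rfl⟩ : {n | ∃ w, eval f w = g ∧ w.length = n}.Nonempty)
  exact ⟨w, hw_len.trans_le hk, hw⟩

theorem leftQuotient_eq_inter_of_eval_eq_mul (L : Set (List (α × Bool))) (H : Subgroup Γ)
    {u : List (α × Bool)} {h g : Γ} (hh : h ∈ H) (hu : eval f u = h * g) :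
    Language.leftQuotient ({w | w ∈ L ∧ eval f w ∈ H} : Language (α × Bool)) u =
      Language.leftQuotient (L : Language (α × Bool)) u ⊓ {y | g * eval f y ∈ H} := by
  ext y
  have : eval f (u ++ y) ∈ H ↔ g * eval f y ∈ H := by
    rw [eval_append, hu, mul_assoc, H.mul_mem_cancel_left hh]
  exact and_congr_right' this

theorem exists_qcw_of_isRegular (L : Set (List (α × Bool))) (H : Subgroup Γ)
    (hK : Language.IsRegular ({w | w ∈ L ∧ eval f w ∈ H} : Language (α × Bool))) :
    ∃ k, QCW f L H k := by
  obtain ⟨k, hk⟩ := hK.exists_bounded_completion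
  refine ⟨k, fun w hwL hwH u ⟨v, huv⟩ => ?_⟩
  obtain ⟨y, ⟨-, huyH⟩, hy_len⟩ := hk u v (huv ▸ ⟨hwL, hwH⟩)
  refine ⟨eval f (u ++ y), huyH, ?_⟩
  calc wlen f ((eval f (u ++ y))⁻¹ * eval f u)
      = wlen f (eval f (FreeGroup.invRev y)) := by rw [eval_invRev, eval_append]; group
    _ ≤ (FreeGroup.invRev y).length := wlen_eval_le f _
    _ ≤ k := by rw [FreeGroup.invRev_length]; exact hy_len

end Words

theorem isRegular_of_qcw (f : A → G) {L : Set (List (A × Bool))} {H : Subgroup G} {k : ℕ}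
    (hL : Language.IsRegular (L : Language (A × Bool))) (hf : ∀ g : G, ∃ w, eval f w = g)
    (hqc : QCW f L H k) :
    Language.IsRegular ({w | w ∈ L ∧ eval f w ∈ H} : Language (A × Bool)) := by
  set K : Language (A × Bool) := {w | w ∈ L ∧ eval f w ∈ H}
  set ball := eval f '' {w | w.length ≤ k}
  have hball : ball.Finite := (List.finite_length_le (A × Bool) k).image _
  have hquot : Set.range K.leftQuotient ⊆ insert 0 (Set.image2
      (fun P g => P ⊓ {y | g * eval f y ∈ H}) (Set.range (Language.leftQuotient L)) ball) := by
    rintro _ ⟨u, rfl⟩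
    by_cases hu : ∃ v, u ++ v ∈ K
    · obtain ⟨v, hwL, hwH⟩ := hu
      obtain ⟨h, hh, hk⟩ := hqc (u ++ v) hwL hwH u (List.prefix_append u v)
      exact Or.inr ⟨_, ⟨u, rfl⟩, _, mem_image_eval_of_wlen_le f (hf _) hk,
        (leftQuotient_eq_inter_of_eval_eq_mul f L H hh (mul_inv_cancel_left h _).symm).symm⟩
    · exact Or.inl (Set.eq_empty_of_forall_notMem fun v hv => hu ⟨v, hv⟩)
  exact .of_finite_range_leftQuotient
    (((hL.finite_range_leftQuotient.image2 _ hball).insert 0).subset hquot)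

/-- H is L-quasi-convex iff L ∩ μ⁻¹(H) is a regular language
(i.e. H is L-rational). -/
theorem stmt3 (f : A → G) (L : Set (List (A × Bool))) (H : Subgroup G)
    (hL : RationalStructure f L) :
    (∃ k, QCW f L H k) ↔
      Language.IsRegular ({w | w ∈ L ∧ eval f w ∈ H} : Language (A × Bool)) := by
  obtain ⟨hL_reg, -, hL_surj⟩ := hL
  have hf : ∀ g : G, ∃ w, eval f w = g := fun g => (hL_surj g).imp fun _ => And.right
  constructor
  · rintro ⟨k, hqc⟩
    exact isRegular_of_qcw f hL_reg hf hqc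
  · exact exists_qcw_of_isRegular f L H
end

section
/- Let L ⊆ Ã* be a language of reduced words with μ(L) = G, let ν : ℕ → ℕ be non-decreasing, and suppose (G, L) satisfies Property BP_ν. Let H ≤ G be L-quasi-convex with constant k. Suppose g₁ = 1, g₂, …, g_n ∈ G are such that the right cosets Hg₁, …, Hg_n are pairwise distinct and the subgroup H^{g₁} ∩ … ∩ H^{g_n} is infinite. Then there exist r₁, …, r_n ∈ G with |r_i| ≤ ν(k) for every i, such that the right cosets Hr₁⁻¹, …, Hr_n⁻¹ are pairwise distinct and H^{r₁⁻¹} ∩ … ∩ H^{r_n⁻¹} is infinite; indeed there exists z ∈ G with H^{r_i⁻¹} = H^{g_i z} for every i, so that ⋂_i H^{r_i⁻¹} = (⋂_i H^{g_i})^z. -/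
open List

variable {A : Type*} [Fintype A] {G : Type*} [Group G]

/-- The left coset g·H as a subset of G. -/
def lcoset (g : G) (H : Subgroup G) : Set G := {x | ∃ h ∈ H, x = g * h}

/-- The right coset H·g as a subset of G. -/
def rcoset (H : Subgroup G) (g : G) : Set G := {x | ∃ h ∈ H, x = h * g}

/-- The conjugate subgroup H^g = g⁻¹Hg. -/
def conjG {G : Type*} [Group G] (H : Subgroup G) (g : G) : Subgroup G :=
  Subgroup.map ((MulAut.conj g⁻¹).toMonoidHom) H

/-- The double coset H·g·K as a subset of G. -/
def dcoset (H : Subgroup G) (g : G) (K : Subgroup G) : Set G :=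
  {x | ∃ h ∈ H, ∃ k ∈ K, x = h * g * k}

/-- Property BP_ν: whenever H, K are L-quasi-convex subgroups with common constant k,
and K, g₁H, …, g_nH are pairwise distinct subsets of G such that
K ∩ g₁Hg₁⁻¹ ∩ … ∩ g_nHg_n⁻¹ is infinite, there exists z ∈ G such that the ball of
center z and radius ν(k) (in the word metric) meets K and each coset g_iH. -/
def BP (f : A → G) (L : Set (List (A × Bool))) (ν : ℕ → ℕ) : Prop :=
  ∀ (H K : Subgroup G) (k : ℕ), QCW f L H k → QCW f L K k →
    ∀ n : ℕ, 1 ≤ n → ∀ g : Fin n → G,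
      Function.Injective
        (Fin.cons (K : Set G) (fun i => lcoset (g i) H) : Fin (n + 1) → Set G) →
      (((K ⊓ ⨅ i, conjG H (g i)⁻¹ : Subgroup G) : Set G)).Infinite →
      ∃ z : G, (∃ w ∈ K, wlen f (z⁻¹ * w) ≤ ν k) ∧
        ∀ i, ∃ w ∈ lcoset (g i) H, wlen f (z⁻¹ * w) ≤ ν k

lemma mem_conjG {G : Type*} [Group G] {H : Subgroup G} {g x : G} :
    x ∈ conjG H g ↔ g * x * g⁻¹ ∈ H := by
  simp only [conjG, Subgroup.mem_map, MulEquiv.coe_toMonoidHom, MulAut.conj_apply, inv_inv]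
  constructor
  · rintro ⟨y, hy, rfl⟩
    have : g * (g⁻¹ * y * g) * g⁻¹ = y := by group
    rwa [this]
  · intro hx
    exact ⟨g * x * g⁻¹, hx, by group⟩

lemma conjG_one {G : Type*} [Group G] (H : Subgroup G) : conjG H 1 = H := by
  ext x; simp [mem_conjG]

lemma conjG_mul {G : Type*} [Group G] (H : Subgroup G) (a b : G) :
    conjG H (a * b) = conjG (conjG H a) b := by
  ext x
  rw [mem_conjG, mem_conjG, mem_conjG]
  constructor
  · intro hx
    have : a * (b * x * b⁻¹) * a⁻¹ = a * b * x * (a * b)⁻¹ := by group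
    rwa [this]
  · intro hx
    have : a * b * x * (a * b)⁻¹ = a * (b * x * b⁻¹) * a⁻¹ := by group
    rwa [this]

lemma conjG_mul_mem {G : Type*} [Group G] (H : Subgroup G) {h : G} (hh : h ∈ H) (x : G) :
    conjG H (h * x) = conjG H x := by
  ext y
  rw [mem_conjG, mem_conjG]
  constructor
  · intro hy
    have : x * y * x⁻¹ = h⁻¹ * (h * x * y * (h * x)⁻¹) * h := by group
    rw [this]
    exact H.mul_mem (H.mul_mem (H.inv_mem hh) (by simpa [mul_assoc] using hy)) hh
  · intro hy
    have : h * x * y * (h * x)⁻¹ = h * (x * y * x⁻¹) * h⁻¹ := by group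
    rw [this]
    exact H.mul_mem (H.mul_mem hh hy) (H.inv_mem hh)

lemma conjG_iInf {G : Type*} [Group G] {ι : Sort*} (F : ι → Subgroup G) (z : G) :
    conjG (⨅ i, F i) z = ⨅ i, conjG (F i) z := by
  ext x; simp [mem_conjG, Subgroup.mem_iInf]

lemma conjG_coe {G : Type*} [Group G] (H : Subgroup G) (z : G) :
    (conjG H z : Set G) = (fun x => z⁻¹ * x * z) '' (H : Set G) := by
  ext x
  simp [conjG, Subgroup.mem_map, MulAut.conj_apply, Set.mem_image]

lemma rcoset_eq_iff {G : Type*} [Group G] {H : Subgroup G} {a b : G} :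
    rcoset H a = rcoset H b ↔ a * b⁻¹ ∈ H := by
  constructor
  · intro hab
    have ha : a ∈ rcoset H a := ⟨1, H.one_mem, by simp⟩
    rw [hab] at ha
    obtain ⟨h, hh, rfl⟩ := ha
    simpa using hh
  · intro hab
    ext x
    constructor
    · rintro ⟨h, hh, rfl⟩
      exact ⟨h * (a * b⁻¹), H.mul_mem hh hab, by group⟩
    · rintro ⟨h, hh, rfl⟩
      exact ⟨h * (b * a⁻¹), H.mul_mem hh (by simpa using H.inv_mem hab), by group⟩

lemma lcoset_eq_iff {G : Type*} [Group G] {H : Subgroup G} {a b : G} :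
    lcoset a H = lcoset b H ↔ a⁻¹ * b ∈ H := by
  constructor
  · intro hab
    have hb : b ∈ lcoset b H := ⟨1, H.one_mem, by simp⟩
    rw [← hab] at hb
    obtain ⟨h, hh, hb⟩ := hb
    have : a⁻¹ * b = h := by rw [hb]; group
    rwa [this]
  · intro hab
    ext x
    constructor
    · rintro ⟨h, hh, rfl⟩
      exact ⟨(a⁻¹ * b)⁻¹ * h, H.mul_mem (H.inv_mem hab) hh, by group⟩
    · rintro ⟨h, hh, rfl⟩
      exact ⟨(a⁻¹ * b) * h, H.mul_mem hab hh, by group⟩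

lemma lcoset_one {G : Type*} [Group G] (H : Subgroup G) : lcoset 1 H = (H : Set G) := by
  ext x
  constructor
  · rintro ⟨h, hh, rfl⟩; simpa using hh
  · intro hx; exact ⟨x, hx, by simp⟩

lemma iInf_fin_succ {G : Type*} [Group G] {n : ℕ} (F : Fin (n + 1) → Subgroup G) :
    (⨅ i, F i) = F 0 ⊓ ⨅ i : Fin n, F i.succ := by
  apply _root_.le_antisymm
  · exact le_inf (iInf_le _ _) (le_iInf fun i => iInf_le _ _)
  · refine le_iInf fun i => ?_
    refine Fin.cases ?_ (fun j => ?_) i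
    · exact inf_le_left
    · exact inf_le_right.trans (iInf_le _ j)

lemma wlen_one (f : A → G) : wlen f (1 : G) = 0 := by
  apply Nat.sInf_eq_zero.mpr
  exact Or.inl ⟨[], rfl, rfl⟩

/-- under Property BP_ν, if H is L-quasi-convex with constant k,
g₀ = 1, g₁, …, g_n ∈ G have pairwise distinct right cosets Hgᵢ and ⋂ᵢ H^{gᵢ} is
infinite, then there are r₀, …, r_n of length ≤ ν(k) whose cosets Hrᵢ⁻¹ are pairwise
distinct with ⋂ᵢ H^{rᵢ⁻¹} infinite; indeed there is z ∈ G with H^{rᵢ⁻¹} = H^{gᵢz} for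
all i, so that ⋂ᵢ H^{rᵢ⁻¹} = (⋂ᵢ H^{gᵢ})^z. -/
theorem stmt13 (f : A → G) (L : Set (List (A × Bool)))
    (hred : ∀ w ∈ L, Reduced w) (hsurj : ∀ g : G, ∃ w ∈ L, eval f w = g)
    (ν : ℕ → ℕ) (hν : Monotone ν) (hBP : BP f L ν)
    (H : Subgroup G) (k : ℕ) (hH : QCW f L H k)
    (n : ℕ) (g : Fin (n + 1) → G) (hg0 : g 0 = 1)
    (hdist : Function.Injective fun i => rcoset H (g i))
    (hinf : (((⨅ i, conjG H (g i) : Subgroup G) : Set G)).Infinite) :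
    ∃ r : Fin (n + 1) → G, (∀ i, wlen f (r i) ≤ ν k) ∧
      Function.Injective (fun i => rcoset H (r i)⁻¹) ∧
      (((⨅ i, conjG H (r i)⁻¹ : Subgroup G) : Set G)).Infinite ∧
      ∃ z : G, (∀ i, conjG H (r i)⁻¹ = conjG H (g i * z)) ∧
        (⨅ i, conjG H (r i)⁻¹) = conjG (⨅ i, conjG H (g i)) z := by
  rcases Nat.eq_zero_or_pos n with hn | hn
  · subst hn
    have hiinf : ∀ (F : Fin 1 → Subgroup G), (⨅ i, F i) = F 0 := fun F => by
      apply _root_.le_antisymm (iInf_le _ _)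
      refine le_iInf fun i => ?_
      rw [Fin.fin_one_eq_zero i]
    have h0 : (⨅ i, conjG H (g i)) = conjG H (g 0) := hiinf _
    rw [h0, hg0, conjG_one] at hinf
    refine ⟨fun _ => 1, fun i => by simp [wlen_one f],
      fun i j _ => (Fin.fin_one_eq_zero i).trans (Fin.fin_one_eq_zero j).symm,
      ?_, 1, fun i => ?_, ?_⟩
    · have h1 : (⨅ i : Fin (0 + 1), conjG H ((fun _ : Fin (0 + 1) => (1 : G)) i)⁻¹)
          = conjG H (1 : G)⁻¹ := hiinf _
      rw [h1, inv_one, conjG_one]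
      exact hinf
    · rw [Fin.fin_one_eq_zero i, hg0]
      simp [conjG_one]
    · calc (⨅ i : Fin (0 + 1), conjG H ((fun _ : Fin (0 + 1) => (1 : G)) i)⁻¹)
          = conjG H (1 : G)⁻¹ := hiinf _
        _ = H := by rw [inv_one, conjG_one]
        _ = conjG H (g 0) := by rw [hg0, conjG_one]
        _ = ⨅ i, conjG H (g i) := (hiinf fun i => conjG H (g i)).symm
        _ = conjG (⨅ i, conjG H (g i)) 1 := (conjG_one _).symm
  · set g' : Fin n → G := fun i => (g i.succ)⁻¹ with hg'
    have hcons : (Fin.cons (H : Set G) (fun i => lcoset (g' i) H) : Fin (n + 1) → Set G)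
        = fun i => lcoset (g i)⁻¹ H := by
      funext i
      refine Fin.cases ?_ (fun j => ?_) i
      · rw [Fin.cons_zero, hg0]
        simp [lcoset_one]
      · rw [Fin.cons_succ]
    have hinj : Function.Injective
        (Fin.cons (H : Set G) (fun i => lcoset (g' i) H) : Fin (n + 1) → Set G) := by
      rw [hcons]
      intro i j hij
      apply hdist
      have hm : (g i)⁻¹⁻¹ * (g j)⁻¹ ∈ H := lcoset_eq_iff.mp hij
      rw [inv_inv] at hm
      exact rcoset_eq_iff.mpr hm
    have hsub : (H ⊓ ⨅ i : Fin n, conjG H (g' i)⁻¹ : Subgroup G)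
        = ⨅ i : Fin (n + 1), conjG H (g i) := by
      rw [iInf_fin_succ (fun i => conjG H (g i)), hg0, conjG_one]
      exact congrArg _ (iInf_congr fun i => by simp only [hg', inv_inv])
    obtain ⟨z, ⟨w0, hw0H, hw0len⟩, hw⟩ :=
      hBP H H k hH hH n hn g' hinj (by rw [hsub]; exact hinf)
    have key : ∀ i : Fin (n + 1), ∃ h ∈ H, wlen f (z⁻¹ * ((g i)⁻¹ * h)) ≤ ν k := by
      intro i
      refine Fin.cases ?_ (fun j => ?_) i
      · exact ⟨w0, hw0H, by rw [hg0]; simpa using hw0len⟩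
      · obtain ⟨w, ⟨h, hh, rfl⟩, hlen⟩ := hw j
        exact ⟨h, hh, hlen⟩
    choose h hhH hlen using key
    refine ⟨fun i => z⁻¹ * ((g i)⁻¹ * h i), fun i => hlen i, ?_, ?_, z, ?_, ?_⟩
    · -- injectivity
      intro i j hij
      simp only at hij
      have hm : (z⁻¹ * ((g i)⁻¹ * h i))⁻¹ * ((z⁻¹ * ((g j)⁻¹ * h j))⁻¹)⁻¹ ∈ H :=
        rcoset_eq_iff.mp hij
      apply hdist
      apply rcoset_eq_iff.mpr
      have heq : g i * (g j)⁻¹ = h i *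
          ((z⁻¹ * ((g i)⁻¹ * h i))⁻¹ * ((z⁻¹ * ((g j)⁻¹ * h j))⁻¹)⁻¹) * (h j)⁻¹ := by
        group
      rw [heq]
      exact H.mul_mem (H.mul_mem (hhH i) hm) (H.inv_mem (hhH j))
    · -- infinite
      have hconj : ∀ i, conjG H (z⁻¹ * ((g i)⁻¹ * h i))⁻¹ = conjG H (g i * z) := by
        intro i
        have : (z⁻¹ * ((g i)⁻¹ * h i))⁻¹ = (h i)⁻¹ * (g i * z) := by group
        rw [this, conjG_mul_mem H (H.inv_mem (hhH i))]
      have hiieq : (⨅ i, conjG H (z⁻¹ * ((g i)⁻¹ * h i))⁻¹)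
          = conjG (⨅ i, conjG H (g i)) z := by
        rw [conjG_iInf]
        exact iInf_congr fun i => by rw [hconj i, conjG_mul]
      rw [hiieq, conjG_coe]
      exact hinf.image (fun a _ b _ hab => by
        have : z * (z⁻¹ * a * z) * z⁻¹ = z * (z⁻¹ * b * z) * z⁻¹ := by rw [hab]
        simpa [mul_assoc] using this)
    · intro i
      have : (z⁻¹ * ((g i)⁻¹ * h i))⁻¹ = (h i)⁻¹ * (g i * z) := by group
      rw [this, conjG_mul_mem H (H.inv_mem (hhH i))]
    · have hconj : ∀ i, conjG H (z⁻¹ * ((g i)⁻¹ * h i))⁻¹ = conjG H (g i * z) := by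
        intro i
        have : (z⁻¹ * ((g i)⁻¹ * h i))⁻¹ = (h i)⁻¹ * (g i * z) := by group
        rw [this, conjG_mul_mem H (H.inv_mem (hhH i))]
      rw [conjG_iInf]
      exact iInf_congr fun i => by rw [hconj i, conjG_mul]
end
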